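/- Let p ≥ 0 and m ≥ 0 be integers. Then every solution of the ODE (1−τ²) a''(τ) + 2(p−1)τ a'(τ) + (2p+m)(m+1) a(τ) = 0 on (−1,1) which is given by a polynomial function is a scalar multiple of the function τ ↦ ((1−τ)/2)^p ((1+τ)/2)^p · P_m^{(p,p)}(τ); i.e. the polynomial solution is unique up to a constant factor. -/
import Mathlib


/-- The generalized binomial coefficient `C(y, k) = (∏_{i=0}^{k−1}(y−i)) / k!`
for real `y` and natural `k`. -/
noncomputable def genBinom (y : ℝ) (k : ℕ) : ℝ :=
  (∏ i ∈ Finset.range k, (y - (i : ℝ))) / (Nat.factorial k : ℝ)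

/-- The Jacobi polynomial
`P_n^{(α,β)}(x) = Σ_{l=0}^{n} C(n+α, l) C(n+β, n−l) ((x−1)/2)^{n−l} ((x+1)/2)^l`. -/
noncomputable def jacobiP (n : ℕ) (α β : ℝ) (x : ℝ) : ℝ :=
  ∑ l ∈ Finset.range (n + 1),
    genBinom ((n : ℝ) + α) l * genBinom ((n : ℝ) + β) (n - l) *
      ((x - 1) / 2) ^ (n - l) * ((x + 1) / 2) ^ l

open Polynomial Finset

noncomputable def Upoly : ℝ[X] := C (1/2) * (X - 1)
noncomputable def Spoly : ℝ[X] := C (1/2) * (X + 1)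

noncomputable def Lop (p m : ℕ) (q : ℝ[X]) : ℝ[X] :=
  (1 - X ^ 2) * derivative (derivative q) + C (2 * ((p : ℝ) - 1)) * (X * derivative q)
    + C ((2 * (p : ℝ) + (m : ℝ)) * ((m : ℝ) + 1)) * q

lemma dU : derivative Upoly = C (1/2) := by simp [Upoly]
lemma dS : derivative Spoly = C (1/2) := by simp [Spoly]
lemma evU (x : ℝ) : Upoly.eval x = (x - 1)/2 := by simp [Upoly]; ring
lemma evS (x : ℝ) : Spoly.eval x = (x + 1)/2 := by simp [Spoly]; ring

lemma Umd (a : ℕ) : Upoly * derivative (Upoly ^ a) = C ((a : ℝ)/2) * Upoly ^ a := by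
  cases a with
  | zero => simp
  | succ n =>
    rw [derivative_pow, dU, Nat.add_sub_cancel]
    apply Polynomial.funext; intro x
    simp [evU]
    push_cast
    ring

lemma Smd (b : ℕ) : Spoly * derivative (Spoly ^ b) = C ((b : ℝ)/2) * Spoly ^ b := by
  cases b with
  | zero => simp
  | succ n =>
    rw [derivative_pow, dS, Nat.add_sub_cancel]
    apply Polynomial.funext; intro x
    simp [evS]
    push_cast
    ring

lemma USd (a b : ℕ) : Upoly * Spoly * derivative (Upoly ^ a * Spoly ^ b)
    = C ((a : ℝ)/2) * (Upoly ^ a * Spoly ^ (b + 1))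
      + C ((b : ℝ)/2) * (Upoly ^ (a + 1) * Spoly ^ b) := by
  rw [derivative_mul]
  linear_combination Spoly ^ (b + 1) * Umd a + Upoly ^ (a + 1) * Smd b

lemma dUS : derivative (Upoly * Spoly) = C (1/2) * (Upoly + Spoly) := by
  rw [derivative_mul, dU, dS]
  apply Polynomial.funext; intro x
  simp [evU, evS]
  ring

lemma h1X : (1 : ℝ[X]) - X ^ 2 = (C (-4) : ℝ[X]) * (Upoly * Spoly) := by
  apply Polynomial.funext; intro x
  simp [evU, evS]
  ring

lemma hX : (X : ℝ[X]) = Upoly + Spoly := by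
  apply Polynomial.funext; intro x
  simp [evU, evS]
  ring

lemma keyG (p m j k : ℕ) :
    Upoly * Spoly * Lop p m (Upoly ^ j * Spoly ^ k) =
      C ((j : ℝ) * ((p : ℝ) - (j : ℝ))) * (Upoly ^ j * Spoly ^ (k + 2))
      + C ((k : ℝ) * ((p : ℝ) - (k : ℝ))) * (Upoly ^ (j + 2) * Spoly ^ k)
      + C ((2 * (p : ℝ) + (m : ℝ)) * ((m : ℝ) + 1)
            + ((p : ℝ) - 1) * ((j : ℝ) + (k : ℝ)) - 2 * (j : ℝ) * (k : ℝ))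
          * (Upoly ^ (j + 1) * Spoly ^ (k + 1)) := by
  set T : ℝ[X] := Upoly ^ j * Spoly ^ k with hT
  set G : ℝ[X] := C ((j : ℝ)/2) * (Upoly ^ j * Spoly ^ (k + 1))
      + C ((k : ℝ)/2) * (Upoly ^ (j + 1) * Spoly ^ k) with hG
  have h1 : Upoly * Spoly * derivative T = G := USd j k
  have h2 : Upoly * Spoly * derivative G =
      C ((j : ℝ)/2) * (C ((j : ℝ)/2) * (Upoly ^ j * Spoly ^ (k + 2))
          + C (((k : ℝ) + 1)/2) * (Upoly ^ (j + 1) * Spoly ^ (k + 1)))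
      + C ((k : ℝ)/2) * (C (((j : ℝ) + 1)/2) * (Upoly ^ (j + 1) * Spoly ^ (k + 1))
          + C ((k : ℝ)/2) * (Upoly ^ (j + 2) * Spoly ^ k)) := by
    rw [hG, derivative_add, derivative_C_mul, derivative_C_mul]
    have e1 := USd j (k + 1)
    have e2 := USd (j + 1) k
    push_cast at e1 e2 ⊢
    linear_combination C ((j : ℝ)/2) * e1 + C ((k : ℝ)/2) * e2
  have h3 : Upoly * Spoly * (Upoly * Spoly * derivative (derivative T)) =
      Upoly * Spoly * derivative G - C (1/2) * (Upoly + Spoly) * G := by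
    rw [← h1, derivative_mul (f := Upoly * Spoly) (g := derivative T), dUS]
    ring
  have expand : Upoly * Spoly * Lop p m T =
      C (-4) * (Upoly * Spoly * (Upoly * Spoly * derivative (derivative T)))
      + C (2 * ((p : ℝ) - 1)) * ((Upoly + Spoly) * (Upoly * Spoly * derivative T))
      + C ((2 * (p : ℝ) + (m : ℝ)) * ((m : ℝ) + 1)) * (Upoly ^ (j + 1) * Spoly ^ (k + 1)) := by
    rw [Lop]
    linear_combination (Upoly * Spoly * derivative (derivative T)) * h1X
      + C (2 * ((p : ℝ) - 1)) * (Upoly * Spoly * derivative T) * hX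
  rw [expand, h3, h2, h1, hG]
  apply Polynomial.funext; intro x
  simp [evU, evS]
  push_cast
  ring

lemma Lop_Cmul (p m : ℕ) (c : ℝ) (q : ℝ[X]) : Lop p m (C c * q) = C c * Lop p m q := by
  simp only [Lop, derivative_C_mul]
  ring

lemma Lop_sum (p m n : ℕ) (f : ℕ → ℝ[X]) :
    Lop p m (∑ l ∈ range n, f l) = ∑ l ∈ range n, Lop p m (f l) := by
  induction n with
  | zero => simp [Lop]
  | succ n ih =>
    rw [Finset.sum_range_succ, Finset.sum_range_succ, ← ih]
    simp only [Lop, derivative_add]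
    ring

noncomputable def bcoef (p m l : ℕ) : ℝ :=
  if l ≤ m then (((m + p).choose l : ℝ) * ((m + p).choose (m - l) : ℝ)) else 0

noncomputable def Tpoly (p m l : ℕ) : ℝ[X] := Upoly ^ (m + p - l) * Spoly ^ (p + l)

noncomputable def T' (p m r : ℕ) : ℝ[X] := Upoly ^ (m + p + 1 - r) * Spoly ^ (p + 1 + r)

noncomputable def Wpoly (p m : ℕ) : ℝ[X] :=
  C ((-1 : ℝ) ^ p) * ∑ l ∈ range (m + 1), C (bcoef p m l) * Tpoly p m l

lemma perl (p m l : ℕ) (hl : l ≤ m) :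
    Upoly * Spoly * Lop p m (Tpoly p m l)
    = C (((m:ℝ) + p - l) * ((p:ℝ) - ((m:ℝ) + p - l))) * T' p m (l + 1)
      + C (((p:ℝ) + l) * ((p:ℝ) - ((p:ℝ) + l))) * (Upoly ^ (m + p - l + 2) * Spoly ^ (p + l))
      + C ((2 * (p : ℝ) + (m : ℝ)) * ((m : ℝ) + 1)
            + ((p : ℝ) - 1) * (((m:ℝ) + p - l) + ((p:ℝ) + l))
            - 2 * ((m:ℝ) + p - l) * ((p:ℝ) + l)) * T' p m l := by
  have h := keyG p m (m + p - l) (p + l)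
  rw [Nat.cast_sub (by omega : l ≤ m + p)] at h
  push_cast at h
  simp only [Tpoly, T']
  rw [show m + p + 1 - (l + 1) = m + p - l from by omega,
      show p + 1 + (l + 1) = p + l + 2 from by omega,
      show m + p + 1 - l = m + p - l + 1 from by omega,
      show p + 1 + l = p + l + 1 from by omega]
  convert h using 3 <;> push_cast <;> ring

lemma bcoef_succ_m (p m : ℕ) : bcoef p m (m + 1) = 0 := by
  simp [bcoef]

lemma cc1 (p m l : ℕ) (hl : l < m) :
    ((m + p).choose (l + 1) : ℝ) * ((l:ℝ) + 1) = ((m + p).choose l : ℝ) * ((m:ℝ) + p - l) := by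
  have h1 := Nat.choose_succ_right_eq (m + p) l
  have := congrArg (Nat.cast : ℕ → ℝ) h1
  push_cast [Nat.cast_sub (by omega : l ≤ m + p)] at this
  linarith [this]

lemma cc2 (p m l : ℕ) (hl : l < m) :
    ((m + p).choose (m - l) : ℝ) * ((m:ℝ) - l) = ((m + p).choose (m - l - 1) : ℝ) * ((p:ℝ) + l + 1) := by
  have h2 := Nat.choose_succ_right_eq (m + p) (m - l - 1)
  rw [show m - l - 1 + 1 = m - l from by omega] at h2
  have := congrArg (Nat.cast : ℕ → ℝ) h2
  push_cast [Nat.cast_sub (by omega : m - l - 1 ≤ m + p),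
    Nat.cast_sub (by omega : 1 ≤ m - l), Nat.cast_sub (by omega : l ≤ m)] at this
  linarith [this]

lemma S1 (p m l : ℕ) (hl : l ≤ m) :
    bcoef p m l * (((m:ℝ) + p - l) * ((p:ℝ) - ((m:ℝ) + p - l)))
      = -(bcoef p m (l + 1) * (((l:ℝ) + 1) * ((p:ℝ) + l + 1))) := by
  rcases eq_or_lt_of_le hl with rfl | hlt
  · rw [bcoef_succ_m]
    ring
  · have c1 := cc1 p m l hlt
    have c2 := cc2 p m l hlt
    rw [bcoef, bcoef, if_pos hl, if_pos (by omega : l + 1 ≤ m),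
      show m - (l + 1) = m - l - 1 from by omega]
    linear_combination (-((l:ℝ) - (m:ℝ))) * (((m + p).choose (m - l) : ℝ)) * c1
      - (((l:ℝ) + 1)) * (((m + p).choose (l + 1) : ℝ)) * c2

lemma S2 (p m l : ℕ) (hl : l ≤ m) :
    bcoef p m (l + 1) * (((p:ℝ) + (l + 1)) * ((p:ℝ) - ((p:ℝ) + (l + 1))))
      = -(bcoef p m l * ((((m:ℝ) + p - l)) * ((m:ℝ) - l))) := by
  rcases eq_or_lt_of_le hl with rfl | hlt
  · rw [bcoef_succ_m]
    ring
  · have c1 := cc1 p m l hlt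
    have c2 := cc2 p m l hlt
    rw [bcoef, bcoef, if_pos hl, if_pos (by omega : l + 1 ≤ m),
      show m - (l + 1) = m - l - 1 from by omega]
    linear_combination (-((p:ℝ) + l + 1)) * (((m + p).choose (m - l - 1) : ℝ)) * c1
      + (((m:ℝ) + p - l)) * (((m + p).choose l : ℝ)) * c2

lemma sum1 (p m : ℕ) :
    (∑ l ∈ range (m + 1),
        C (bcoef p m l * (((m:ℝ) + p - l) * ((p:ℝ) - ((m:ℝ) + p - l)))) * T' p m (l + 1))
    = ∑ l ∈ range (m + 1), C (-(bcoef p m l * ((l:ℝ) * ((p:ℝ) + l)))) * T' p m l := by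
  set g : ℕ → ℝ[X] := fun r => C (-(bcoef p m r * ((r:ℝ) * ((p:ℝ) + r)))) * T' p m r with hg
  have hstep : ∀ l ∈ range (m + 1),
      C (bcoef p m l * (((m:ℝ) + p - l) * ((p:ℝ) - ((m:ℝ) + p - l)))) * T' p m (l + 1)
        = g (l + 1) := by
    intro l hl
    rw [hg]
    simp only []
    rw [S1 p m l (by simp at hl; omega)]
    congr 2
    push_cast
    ring
  rw [Finset.sum_congr rfl hstep]
  have h' := Finset.sum_range_succ' g (m + 1)
  have e2 := Finset.sum_range_succ g (m + 1)
  have hg0 : g 0 = 0 := by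
    rw [hg]; simp
  have hgm : g (m + 1) = 0 := by
    rw [hg]; simp only []; rw [bcoef_succ_m]; simp
  calc ∑ l ∈ range (m + 1), g (l + 1) = ∑ l ∈ range (m + 1 + 1), g l - g 0 := by
        rw [h']; ring
    _ = ∑ l ∈ range (m + 1), g l := by rw [e2, hg0, hgm]; ring

lemma sum2 (p m : ℕ) :
    (∑ l ∈ range (m + 1),
        C (bcoef p m l * (((p:ℝ) + l) * ((p:ℝ) - ((p:ℝ) + l))))
          * (Upoly ^ (m + p - l + 2) * Spoly ^ (p + l)))
    = ∑ l ∈ range (m + 1),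
        C (-(bcoef p m l * (((m:ℝ) + p - l) * ((m:ℝ) - l)))) * T' p m l := by
  set h : ℕ → ℝ[X] := fun r => C (-(bcoef p m r * (((m:ℝ) + p - r) * ((m:ℝ) - r)))) * T' p m r
    with hh
  set f : ℕ → ℝ[X] := fun l =>
      C (bcoef p m l * (((p:ℝ) + l) * ((p:ℝ) - ((p:ℝ) + l))))
        * (Upoly ^ (m + p - l + 2) * Spoly ^ (p + l)) with hf
  have h' := Finset.sum_range_succ' f m
  have hf0 : f 0 = 0 := by rw [hf]; simp
  have hstep : ∀ l ∈ range m, f (l + 1) = h l := by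
    intro l hl
    have hlm : l < m := by simpa using hl
    rw [hf, hh]
    simp only []
    rw [show m + p - (l + 1) + 2 = m + p + 1 - l from by omega,
      show p + (l + 1) = p + 1 + l from by omega]
    have := S2 p m l (le_of_lt hlm)
    rw [T']
    push_cast at this ⊢
    rw [this]
  have e2 := Finset.sum_range_succ h m
  have hhm : h m = 0 := by
    rw [hh]; simp only []
    have : -(bcoef p m m * (((m:ℝ) + p - m) * ((m:ℝ) - m))) = 0 := by ring
    rw [this, map_zero, zero_mul]
  calc ∑ l ∈ range (m + 1), f l = ∑ l ∈ range m, f (l + 1) + f 0 := h'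
    _ = ∑ l ∈ range m, h l + 0 := by
        rw [Finset.sum_congr rfl hstep, hf0]
    _ = ∑ l ∈ range (m + 1), h l := by rw [e2, hhm]

lemma UShne : Upoly * Spoly ≠ 0 := by
  intro h
  have := congrArg (eval 3) h
  simp [evU, evS] at this
  norm_num at this

lemma LopW (p m : ℕ) : Lop p m (Wpoly p m) = 0 := by
  suffices h : Upoly * Spoly * Lop p m (Wpoly p m) = 0 by
    rcases mul_eq_zero.mp h with h' | h'
    · exact absurd h' UShne
    · exact h'
  have step1 : Upoly * Spoly * Lop p m (Wpoly p m)
      = C ((-1 : ℝ) ^ p) * ∑ l ∈ range (m + 1),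
          C (bcoef p m l) * (Upoly * Spoly * Lop p m (Tpoly p m l)) := by
    rw [Wpoly, Lop_Cmul, Lop_sum, Finset.mul_sum, Finset.mul_sum, Finset.mul_sum]
    apply Finset.sum_congr rfl
    intro l _
    rw [Lop_Cmul]
    ring
  rw [step1]
  have step2 : ∀ l ∈ range (m + 1),
      C (bcoef p m l) * (Upoly * Spoly * Lop p m (Tpoly p m l))
      = C (bcoef p m l * (((m:ℝ) + p - l) * ((p:ℝ) - ((m:ℝ) + p - l)))) * T' p m (l + 1)
        + C (bcoef p m l * (((p:ℝ) + l) * ((p:ℝ) - ((p:ℝ) + l))))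
            * (Upoly ^ (m + p - l + 2) * Spoly ^ (p + l))
        + C (bcoef p m l * ((2 * (p : ℝ) + (m : ℝ)) * ((m : ℝ) + 1)
              + ((p : ℝ) - 1) * (((m:ℝ) + p - l) + ((p:ℝ) + l))
              - 2 * ((m:ℝ) + p - l) * ((p:ℝ) + l))) * T' p m l := by
    intro l hl
    rw [perl p m l (by simp at hl; omega)]
    simp only [mul_add, ← mul_assoc, ← C_mul]
  rw [Finset.sum_congr rfl step2, Finset.sum_add_distrib, Finset.sum_add_distrib, sum1, sum2,
    ← Finset.sum_add_distrib, ← Finset.sum_add_distrib]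
  have step3 : ∀ l ∈ range (m + 1),
      C (-(bcoef p m l * ((l:ℝ) * ((p:ℝ) + l)))) * T' p m l
        + C (-(bcoef p m l * (((m:ℝ) + p - l) * ((m:ℝ) - l)))) * T' p m l
        + C (bcoef p m l * ((2 * (p : ℝ) + (m : ℝ)) * ((m : ℝ) + 1)
              + ((p : ℝ) - 1) * (((m:ℝ) + p - l) + ((p:ℝ) + l))
              - 2 * ((m:ℝ) + p - l) * ((p:ℝ) + l))) * T' p m l = 0 := by
    intro l _
    rw [← add_mul, ← add_mul, ← C_add, ← C_add]
    have : -(bcoef p m l * ((l:ℝ) * ((p:ℝ) + l)))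
        + -(bcoef p m l * (((m:ℝ) + p - l) * ((m:ℝ) - l)))
        + bcoef p m l * ((2 * (p : ℝ) + (m : ℝ)) * ((m : ℝ) + 1)
              + ((p : ℝ) - 1) * (((m:ℝ) + p - l) + ((p:ℝ) + l))
              - 2 * ((m:ℝ) + p - l) * ((p:ℝ) + l)) = 0 := by ring
    rw [this, map_zero, zero_mul]
  rw [Finset.sum_congr rfl step3, Finset.sum_const_zero, mul_zero]

lemma recur (p m : ℕ) (q : ℝ[X]) (hq : Lop p m q = 0) (n : ℕ) :
    ((n:ℝ) + 2) * ((n:ℝ) + 1) * q.coeff (n + 2)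
      + (2 * (p:ℝ) + (m:ℝ) - (n:ℝ)) * ((n:ℝ) + (m:ℝ) + 1) * q.coeff n = 0 := by
  have hq' : derivative (derivative q) - X ^ 2 * derivative (derivative q)
      + C (2 * ((p : ℝ) - 1)) * (X * derivative q)
      + C ((2 * (p : ℝ) + (m : ℝ)) * ((m : ℝ) + 1)) * q = 0 := by
    rw [← hq, Lop]; ring
  have h := congrArg (fun r : ℝ[X] => r.coeff n) hq'
  simp only [coeff_add, coeff_sub, coeff_zero, coeff_C_mul,
    coeff_X_pow_mul', coeff_derivative] at h
  match n with
  | 0 =>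
    rw [if_neg (by omega)] at h
    simp only [mul_coeff_zero, coeff_X_zero, coeff_derivative, zero_mul, mul_zero,
      sub_zero] at h
    push_cast
    linear_combination h
  | 1 =>
    rw [if_neg (by omega)] at h
    simp only [coeff_X_mul, coeff_derivative, zero_mul, mul_zero, sub_zero] at h
    push_cast
    linear_combination h
  | (k + 2) =>
    rw [if_pos (by omega)] at h
    simp only [show k + 2 - 2 = k from by omega, coeff_derivative,
      show k + 2 = k + 1 + 1 from by omega, coeff_X_mul] at h
    push_cast at h ⊢
    linear_combination h

lemma cne (p m n : ℕ) (hn : n ≠ 2 * p + m) :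
    (2 * (p:ℝ) + (m:ℝ) - (n:ℝ)) * ((n:ℝ) + (m:ℝ) + 1) ≠ 0 := by
  apply mul_ne_zero
  · have : ((n:ℝ)) ≠ ((2 * p + m : ℕ) : ℝ) := by
      exact_mod_cast hn
    push_cast at this
    intro hc
    apply this
    linarith
  · positivity

lemma coeff_high (p m : ℕ) (q : ℝ[X]) (hq : Lop p m q = 0) :
    ∀ n, 2 * p + m < n → q.coeff n = 0 := by
  have aux : ∀ k n, 2 * p + m < n → q.natDegree < n + 2 * k → q.coeff n = 0 := by
    intro k
    induction k with
    | zero =>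
      intro n _ hd
      exact coeff_eq_zero_of_natDegree_lt (by omega)
    | succ k ih =>
      intro n hn hd
      rcases Nat.lt_or_ge q.natDegree n with h | h
      · exact coeff_eq_zero_of_natDegree_lt h
      · have h2 : q.coeff (n + 2) = 0 := ih (n + 2) (by omega) (by omega)
        have hr := recur p m q hq n
        rw [h2] at hr
        have := cne p m n (by omega)
        have hr' : (2 * (p:ℝ) + (m:ℝ) - (n:ℝ)) * ((n:ℝ) + (m:ℝ) + 1) * q.coeff n = 0 := by
          linarith
        exact (mul_eq_zero.mp hr').resolve_left this
  intro n hn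
  exact aux (q.natDegree + 1) n hn (by omega)

lemma kernel_zero (p m : ℕ) (q : ℝ[X]) (hq : Lop p m q = 0)
    (htop : q.coeff (2 * p + m) = 0) : q = 0 := by
  have aux : ∀ k n, 2 * p + m ≤ n + 2 * k → q.coeff n = 0 := by
    intro k
    induction k with
    | zero =>
      intro n hn
      rcases Nat.lt_or_ge (2 * p + m) n with h | h
      · exact coeff_high p m q hq n h
      · have : n = 2 * p + m := by omega
        rw [this]; exact htop
    | succ k ih =>
      intro n hn
      rcases Nat.lt_or_ge (2 * p + m) n with h | h
      · exact coeff_high p m q hq n h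
      · rcases Nat.eq_or_lt_of_le h with h' | h'
        · rw [h']; exact htop
        · have h2 : q.coeff (n + 2) = 0 := ih (n + 2) (by omega)
          have hr := recur p m q hq n
          rw [h2] at hr
          have := cne p m n (by omega)
          have hr' : (2 * (p:ℝ) + (m:ℝ) - (n:ℝ)) * ((n:ℝ) + (m:ℝ) + 1) * q.coeff n = 0 := by
            linarith
          exact (mul_eq_zero.mp hr').resolve_left this
  ext n
  rw [coeff_zero]
  exact aux (2 * p + m) n (by omega)

lemma Tcoeff (p m l : ℕ) (hl : l ≤ m) :
    (Tpoly p m l).coeff (2 * p + m) = (1/2 : ℝ) ^ (2 * p + m) := by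
  have hexp : (m + p - l) + (p + l) = 2 * p + m := by omega
  have hT : Tpoly p m l
      = C ((1/2 : ℝ) ^ (2 * p + m)) * ((X - C 1) ^ (m + p - l) * (X + C 1) ^ (p + l)) := by
    rw [Tpoly, Upoly, Spoly, mul_pow, mul_pow, ← C_pow, ← C_pow]
    rw [show ((1:ℝ)/2) ^ (2*p+m) = (1/2:ℝ)^(m+p-l) * (1/2:ℝ)^(p+l) from by
      rw [← pow_add, hexp]]
    rw [C_mul]
    simp only [C_1]
    ring
  have hmonic : ((X - C 1) ^ (m + p - l) * (X + C 1) ^ (p + l) : ℝ[X]).Monic :=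
    ((monic_X_sub_C 1).pow _).mul ((monic_X_add_C 1).pow _)
  have hdeg : ((X - C 1) ^ (m + p - l) * (X + C 1) ^ (p + l) : ℝ[X]).natDegree = 2 * p + m := by
    rw [Monic.natDegree_mul ((monic_X_sub_C 1).pow _) ((monic_X_add_C 1).pow _),
      natDegree_pow, natDegree_pow, natDegree_X_sub_C, natDegree_X_add_C]
    omega
  rw [hT, coeff_C_mul, ← hdeg, Monic.coeff_natDegree hmonic, mul_one]

lemma Wcoeff (p m : ℕ) : (Wpoly p m).coeff (2 * p + m) ≠ 0 := by
  have : (Wpoly p m).coeff (2 * p + m)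
      = (-1 : ℝ) ^ p * ((1/2 : ℝ) ^ (2 * p + m) * ∑ l ∈ range (m + 1), bcoef p m l) := by
    rw [Wpoly, coeff_C_mul, finset_sum_coeff, Finset.mul_sum, Finset.mul_sum, Finset.mul_sum]
    apply Finset.sum_congr rfl
    intro l hl
    rw [coeff_C_mul, Tcoeff p m l (by simp at hl; omega)]
    ring
  rw [this]
  have hpos : 0 < ∑ l ∈ range (m + 1), bcoef p m l := by
    apply Finset.sum_pos'
    · intro l _
      rw [bcoef]
      split_ifs
      · positivity
      · exact le_refl 0
    · refine ⟨0, by simp, ?_⟩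
      rw [bcoef, if_pos (by omega)]
      have h1 : 0 < (m + p).choose 0 := Nat.choose_pos (by omega)
      have h2 : 0 < (m + p).choose m := Nat.choose_pos (by omega)
      positivity
  have h1 : ((-1 : ℝ) ^ p) ≠ 0 := by
    apply pow_ne_zero; norm_num
  have h2 : (0:ℝ) < (1/2 : ℝ) ^ (2 * p + m) := by positivity
  intro hc
  rcases mul_eq_zero.mp hc with h | h
  · exact h1 h
  · rcases mul_eq_zero.mp h with h' | h'
    · linarith
    · linarith

lemma genBinom_nat (n k : ℕ) (hk : k ≤ n) : genBinom (n : ℝ) k = (n.choose k : ℝ) := by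
  have hprod : (∏ i ∈ Finset.range k, ((n:ℝ) - (i:ℝ))) = ((n.descFactorial k : ℕ) : ℝ) := by
    rw [Nat.descFactorial_eq_prod_range, Nat.cast_prod]
    apply Finset.prod_congr rfl
    intro i hi
    rw [Nat.cast_sub (by have := Finset.mem_range.mp hi; omega)]
  rw [genBinom, hprod, Nat.descFactorial_eq_factorial_mul_choose]
  push_cast
  rw [mul_comm, mul_div_assoc, div_self (by positivity : ((k.factorial : ℝ)) ≠ 0), mul_one]

lemma evalW (p m : ℕ) (x : ℝ) :
    (Wpoly p m).eval x = ((1 - x) / 2) ^ p * ((1 + x) / 2) ^ p * jacobiP m (p : ℝ) (p : ℝ) x := by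
  have hL : (Wpoly p m).eval x = ∑ l ∈ range (m + 1),
      (-1 : ℝ) ^ p * bcoef p m l * (((x - 1)/2) ^ (m + p - l) * (((x + 1)/2) ^ (p + l))) := by
    rw [Wpoly, eval_mul, eval_C, eval_finset_sum, Finset.mul_sum]
    apply Finset.sum_congr rfl
    intro l _
    rw [eval_mul, eval_C, Tpoly, eval_mul, eval_pow, eval_pow, evU, evS]
    ring
  rw [hL, jacobiP, Finset.mul_sum]
  apply Finset.sum_congr rfl
  intro l hl
  have hlm : l ≤ m := by simp at hl; omega
  have hcast : (m : ℝ) + (p : ℝ) = ((m + p : ℕ) : ℝ) := by push_cast; ring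
  rw [hcast, genBinom_nat (m + p) l (by omega), genBinom_nat (m + p) (m - l) (by omega)]
  rw [bcoef, if_pos hlm]
  have h1 : ((1 - x) / 2) ^ p = (-1 : ℝ) ^ p * ((x - 1)/2) ^ p := by
    rw [show (1 - x)/2 = -((x - 1)/2) from by ring, neg_pow]
  rw [h1]
  have h2 : ((x - 1)/2) ^ p * ((x - 1)/2) ^ (m - l) = ((x - 1)/2) ^ (m + p - l) := by
    rw [← pow_add, show p + (m - l) = m + p - l from by omega]
  have h3 : ((x + 1)/2) ^ p * ((x + 1)/2) ^ l = ((x + 1)/2) ^ (p + l) := by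
    rw [← pow_add]
  rw [← h2, ← h3]
  ring

lemma Lop_sub (p m : ℕ) (q r : ℝ[X]) : Lop p m (q - r) = Lop p m q - Lop p m r := by
  simp only [Lop, derivative_sub]
  ring

/-- Every polynomial solution on `(−1,1)` of the Jacobi-type ODE
`(1−τ²)a'' + 2(p−1)τ a' + (2p+m)(m+1) a = 0` is a scalar multiple of
`τ ↦ ((1−τ)/2)^p ((1+τ)/2)^p P_m^{(p,p)}(τ)`. -/
theorem stmt13 (p m : ℕ) (a : ℝ → ℝ)
    (hpoly : ∃ q : Polynomial ℝ, ∀ τ : ℝ, a τ = q.eval τ)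
    (hODE : ∀ τ ∈ Set.Ioo (-1 : ℝ) 1,
      (1 - τ ^ 2) * deriv (deriv a) τ + 2 * ((p : ℝ) - 1) * τ * deriv a τ
        + (2 * (p : ℝ) + (m : ℝ)) * ((m : ℝ) + 1) * a τ = 0) :
    ∃ c : ℝ, ∀ τ : ℝ,
      a τ = c * (((1 - τ) / 2) ^ p * ((1 + τ) / 2) ^ p * jacobiP m (p : ℝ) (p : ℝ) τ) := by
  obtain ⟨q, hq⟩ := hpoly
  have ha : a = fun τ => q.eval τ := funext hq
  have hd1 : deriv a = fun τ => (derivative q).eval τ := by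
    funext τ
    rw [ha]
    exact Polynomial.deriv (p := q)
  have hd2 : deriv (deriv a) = fun τ => (derivative (derivative q)).eval τ := by
    funext τ
    rw [hd1]
    exact Polynomial.deriv (p := derivative q)
  have hroot : ∀ τ ∈ Set.Ioo (-1 : ℝ) 1, (Lop p m q).IsRoot τ := by
    intro τ hτ
    have h := hODE τ hτ
    rw [hd2, hd1, ha] at h
    simp only [] at h
    simp only [IsRoot, Lop, eval_add, eval_mul, eval_sub, eval_one, eval_pow, eval_X, eval_C]
    linarith [h]
  have hker : Lop p m q = 0 := by
    apply Polynomial.eq_zero_of_infinite_isRoot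
    apply Set.Infinite.mono _ (Set.Ioo_infinite (by norm_num : (-1 : ℝ) < 1))
    intro τ hτ
    exact hroot τ hτ
  set c : ℝ := q.coeff (2 * p + m) / (Wpoly p m).coeff (2 * p + m) with hc
  refine ⟨c, ?_⟩
  have hr : q - C c * Wpoly p m = 0 := by
    refine kernel_zero p m _ ?_ ?_
    · rw [Lop_sub, hker, Lop_Cmul, LopW, mul_zero, sub_zero]
    · rw [coeff_sub, coeff_C_mul, hc, div_mul_cancel₀ _ (Wcoeff p m), sub_self]
  have hqc : q = C c * Wpoly p m := by
    rw [← sub_eq_zero]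
    exact hr
  intro τ
  rw [hq τ, hqc, eval_mul, eval_C, evalW]
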